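/- Consider the Crank–Nicolson scheme i(u^{n+1}_j - u^n_j)/Δt + (1/2)(Lu^{n+1})_j + (1/2)(Lu^n)_j = -F_j(u^{n+1},u^n) on ℂ^N with L real symmetric and F_j(u^{n+1},u^n) = (1/(p+1)) · ((|u^{n+1}_j|^{p+1} - |u^n_j|^{p+1})/(|u^{n+1}_j|² - |u^n_j|²)) · (u^{n+1}_j + u^n_j) when |u^{n+1}_j| ≠ |u^n_j|. Then the discrete energy E[u^n] = (1/2)⟨Lu^n, u^n⟩_ℝ - (1/(p+1)) Σ_j |u^n_j|^{p+1} satisfies E[u^{n+1}] = E[u^n], where ⟨·,·⟩_ℝ denotes the real part of the Hermitian inner product and L is taken with sign so that ⟨Lu,u⟩ corresponds to the discrete Dirichlet form. -/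

import Mathlib

/-!
Multiply the `j`-th equation of the scheme by `conj (w j - u j)` and take real parts. The time
difference term becomes `i |w j - u j|² / Δt`, which is purely imaginary; the nonlinear term gives
`Re ((w j + u j) conj (w j - u j)) = |w j|² - |u j|²`, which cancels the denominator of the
difference quotient; and, `L` being symmetric, the sum over `j` of the linear terms is the increment
of `Re ⟨L x, x⟩`. Hence the two parts of the energy change by opposite amounts.
-/

open Complex

/-- Discrete energy: `E[x] = (1/2)⟨Ax, x⟩_ℝ - (1/(p+1)) Σ_j |x_j|^{p+1}`, where
`A = -L` carries the sign of the discrete Dirichlet form. -/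
noncomputable def discreteEnergy {N : ℕ} (p : ℝ) (L : Matrix (Fin N) (Fin N) ℝ)
    (x : Fin N → ℂ) : ℝ :=
  (1 / 2) * (∑ j : Fin N, ((-L).map Complex.ofReal).mulVec x j * (starRingEnd ℂ) (x j)).re
    - 1 / (p + 1) * ∑ j : Fin N, ‖x j‖ ^ (p + 1)

open Matrix ComplexConjugate

theorem Matrix.IsSymm.isHermitian_map_ofReal {n : Type*} {L : Matrix n n ℝ} (hL : L.IsSymm) :
    (L.map ofReal).IsHermitian := by
  ext i j
  simp [hL.apply i j]

section Hermitian

variable {n : Type*} [Fintype n] {A : Matrix n n ℂ}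

theorem Matrix.IsHermitian.re_sum_mulVec_mul_conj_comm (hA : A.IsHermitian) (x y : n → ℂ) :
    (∑ j, (A *ᵥ x) j * conj (y j)).re = (∑ j, (A *ᵥ y) j * conj (x j)).re := by
  have hconj : ∑ j, (A *ᵥ x) j * conj (y j) = conj (∑ j, (A *ᵥ y) j * conj (x j)) := by
    simp only [mulVec, dotProduct, Finset.sum_mul, map_sum, map_mul, conj_conj]
    rw [Finset.sum_comm]
    refine Finset.sum_congr rfl fun j _ => Finset.sum_congr rfl fun k _ => ?_
    rw [← hA.apply j k, star_def, conj_conj]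
    ring
  rw [hconj, conj_re]

theorem Matrix.IsHermitian.re_sum_mulVec_mul_conj_sub (hA : A.IsHermitian) (w u : n → ℂ) :
    (∑ j, (A *ᵥ w) j * conj (w j)).re - (∑ j, (A *ᵥ u) j * conj (u j)).re
      = ∑ j, (((A *ᵥ w) j + (A *ᵥ u) j) * conj (w j - u j)).re := by
  have hwu := hA.re_sum_mulVec_mul_conj_comm w u
  simp only [re_sum, map_sub, add_mul, mul_sub, add_re, sub_re, Finset.sum_add_distrib,
    Finset.sum_sub_distrib] at hwu ⊢
  linarith

end Hermitian

theorem re_add_mul_conj_sub (a b : ℂ) : ((a + b) * conj (a - b)).re = ‖a‖ ^ 2 - ‖b‖ ^ 2 := by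
  simp only [mul_re, add_re, add_im, conj_re, conj_im, sub_re, sub_im, Complex.sq_norm,
    normSq_apply]
  ring

theorem re_I_mul_div_mul_conj (z : ℂ) (τ : ℝ) : (I * z / τ * conj z).re = 0 := by
  simp [div_mul_eq_mul_div, mul_assoc, mul_conj]

theorem re_add_mul_conj_sub_of_crankNicolson {a b x y : ℂ} {τ c : ℝ}
    (h : I * (a - b) / τ + (1 / 2) * x + (1 / 2) * y = -(c : ℂ) * (a + b)) :
    ((x + y) * conj (a - b)).re = -2 * c * (‖a‖ ^ 2 - ‖b‖ ^ 2) := by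
  have hxy : x + y = ((-2 * c : ℝ) : ℂ) * (a + b) - ((2 : ℝ) : ℂ) * (I * (a - b) / τ) := by
    push_cast
    linear_combination 2 * h
  rw [hxy, sub_mul, mul_assoc, mul_assoc, sub_re, re_ofReal_mul, re_ofReal_mul,
    re_I_mul_div_mul_conj, re_add_mul_conj_sub, mul_zero, sub_zero]

theorem rpow_sub_rpow_div_sq_sub_sq_mul {x y : ℝ} (hx : 0 ≤ x) (hy : 0 ≤ y) (q : ℝ) :
    (x ^ q - y ^ q) / (x ^ 2 - y ^ 2) * (x ^ 2 - y ^ 2) = x ^ q - y ^ q :=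
  div_mul_cancel_of_imp fun h => by
    rw [(pow_left_inj₀ hx hy two_ne_zero).1 (sub_eq_zero.1 h), sub_self]

theorem discreteEnergy_eq {N : ℕ} (p : ℝ) (L : Matrix (Fin N) (Fin N) ℝ) (x : Fin N → ℂ) :
    discreteEnergy p L x = -(1 / 2) * (∑ j, (L.map ofReal *ᵥ x) j * conj (x j)).re
      - 1 / (p + 1) * ∑ j, ‖x j‖ ^ (p + 1) := by
  have hneg : (-L).map ofReal = -L.map ofReal := by
    ext
    simp
  simp [discreteEnergy, hneg, neg_mulVec]

theorem crank_nicolson_energy_conservation_general {N : ℕ} (Δt : ℝ) (p : ℝ)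
    (L : Matrix (Fin N) (Fin N) ℝ) (hL : L.IsSymm)
    (u w : Fin N → ℂ)
    (hscheme : ∀ j : Fin N,
      Complex.I * (w j - u j) / (Δt : ℂ)
        + (1 / 2) * (L.map Complex.ofReal).mulVec w j
        + (1 / 2) * (L.map Complex.ofReal).mulVec u j
      = -(((1 / (p + 1)) *
            ((‖w j‖ ^ (p + 1) - ‖u j‖ ^ (p + 1)) /
              (‖w j‖ ^ 2 - ‖u j‖ ^ 2)) : ℝ) : ℂ) *
          (w j + u j)) :
    discreteEnergy p L w = discreteEnergy p L u := by
  have hlocal : ∀ j, (((L.map ofReal *ᵥ w) j + (L.map ofReal *ᵥ u) j) * conj (w j - u j)).re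
      = -(2 / (p + 1)) * (‖w j‖ ^ (p + 1) - ‖u j‖ ^ (p + 1)) := fun j => by
    rw [re_add_mul_conj_sub_of_crankNicolson (hscheme j), mul_assoc, mul_assoc,
      rpow_sub_rpow_div_sq_sub_sq_mul (norm_nonneg _) (norm_nonneg _)]
    ring
  have hquad := hL.isHermitian_map_ofReal.re_sum_mulVec_mul_conj_sub w u
  rw [Finset.sum_congr rfl fun j _ => hlocal j, ← Finset.mul_sum,
    Finset.sum_sub_distrib] at hquad
  rw [discreteEnergy_eq, discreteEnergy_eq]
  linear_combination (-(1 / 2) : ℝ) * hquad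

/-- the Crank–Nicolson scheme with the Delfour–Fortin–Payre
discretized nonlinearity conserves the discrete energy. -/
theorem crank_nicolson_energy_conservation {N : ℕ} (Δt : ℝ) (hΔt : 0 < Δt) (p : ℝ)
    (hp : 1 < p) (L : Matrix (Fin N) (Fin N) ℝ) (hL : L.IsSymm)
    (u w : Fin N → ℂ) (habs : ∀ j, ‖w j‖ ≠ ‖u j‖)
    (hscheme : ∀ j : Fin N,
      Complex.I * (w j - u j) / (Δt : ℂ)
        + (1 / 2) * (L.map Complex.ofReal).mulVec w j
        + (1 / 2) * (L.map Complex.ofReal).mulVec u j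
      = -(((1 / (p + 1)) *
            ((‖w j‖ ^ (p + 1) - ‖u j‖ ^ (p + 1)) /
              (‖w j‖ ^ 2 - ‖u j‖ ^ 2)) : ℝ) : ℂ) *
          (w j + u j)) :
    discreteEnergy p L w = discreteEnergy p L u :=
  crank_nicolson_energy_conservation_general Δt p L hL u w hscheme
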